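/- arXiv:2111.09696 — 2 statements merged into one kernel-verified Lean document; each statement's English description precedes it below -/
import Mathlib

section
/- Let n ≥ 2, let G₁ and G₂ be simple graphs on Fin n, and let S(G) = {s i : i ∈ Fin n} ∪ {(s i + s j)/2 : G.Adj i j} be the point-set form of a graph G, where s are the centered standard simplex vertices. If L is a linear isometry equivalence of EuclideanSpace ℝ (Fin n) with L '' S(G₁) = S(G₂), then L maps the vertex set {s i : i ∈ Fin n} onto itself and maps the midpoint set {(s i + s j)/2 : G₁.Adj i j} onto {(s i + s j)/2 : G₂.Adj i j}. (That is, the restriction that vertices map to vertices and edge points map to edge points is automatic.) -/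
/-!
A linear isometry preserves norms, and the two kinds of points of `S(G)` lie on different spheres
about the origin: `‖s i‖² = 1 - 1/n`, while `‖(s i + s j)/2‖² = 1/2 - 1/n` for `i ≠ j`. Hence each
kind of point is cut out of `S(G)` by its sphere, and `L` maps the sphere's slice of `S(G₁)` onto
that of `S(G₂)`.
-/

/-- The centered standard simplex vertices: `s i = e_i - (1/n) • ∑ j, e_j`,
where `e_i` is the standard basis of `EuclideanSpace ℝ (Fin n)`. -/
noncomputable def simplexPt (n : ℕ) (i : Fin n) : EuclideanSpace ℝ (Fin n) :=
  EuclideanSpace.single i (1 : ℝ) - ((1 : ℝ) / n) • ∑ j, EuclideanSpace.single j (1 : ℝ)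

/-- The coordinate-permutation map `M_σ` (the permutation matrix of `σ`), as a linear
isometry equivalence of `EuclideanSpace ℝ (Fin n)`. -/
noncomputable def Mperm (n : ℕ) (σ : Equiv.Perm (Fin n)) :
    EuclideanSpace ℝ (Fin n) ≃ₗᵢ[ℝ] EuclideanSpace ℝ (Fin n) :=
  LinearIsometryEquiv.piLpCongrLeft 2 ℝ ℝ σ

/-- The point-set form of a simple graph `G` on `Fin n`:
`S(G) = {s i : i} ∪ {(s i + s j)/2 : G.Adj i j}`. -/
noncomputable def pointSet (n : ℕ) (G : SimpleGraph (Fin n)) :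
    Set (EuclideanSpace ℝ (Fin n)) :=
  Set.range (simplexPt n) ∪
    {p | ∃ i j : Fin n, G.Adj i j ∧ p = (2 : ℝ)⁻¹ • (simplexPt n i + simplexPt n j)}

open RealInnerProductSpace

theorem Set.eq_union_inter_of_subset_of_disjoint {α : Type*} {A B U W : Set α}
    (hA : A ⊆ U) (hB : B ⊆ W) (hUW : Disjoint U W) : A = (A ∪ B) ∩ U := by
  rw [Set.union_inter_distrib_right, Set.inter_eq_left.mpr hA,
    (hUW.symm.mono_left hB).inter_eq, Set.union_empty]

theorem image_inter_norm_sq_eq_of_norm_map {E F : Type*} [Norm E] [Norm F] {f : E → F}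
    (hf : ∀ x, ‖f x‖ = ‖x‖) (S : Set E) (r : ℝ) :
    f '' (S ∩ {x | ‖x‖ ^ 2 = r}) = f '' S ∩ {y | ‖y‖ ^ 2 = r} := by
  rw [← Set.image_inter_preimage]
  simp only [Set.preimage_ofPred_eq, hf]

section SimplexPt

variable {n : ℕ}

theorem simplexPt_apply (i k : Fin n) :
    simplexPt n i k = (if k = i then 1 else 0) - 1 / n := by
  simp [simplexPt, PiLp.single_apply]

theorem inner_simplexPt (i j : Fin n) :
    ⟪simplexPt n i, simplexPt n j⟫ = (if i = j then 1 else 0) - 1 / n := by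
  have hn : (n : ℝ) ≠ 0 := Nat.cast_ne_zero.mpr (Fin.pos i).ne'
  simp only [PiLp.inner_apply, simplexPt_apply, RCLike.inner_apply, conj_trivial]
  simp [sub_mul, mul_sub, Finset.sum_sub_distrib, ite_mul, eq_comm]
  field_simp
  ring

theorem norm_sq_simplexPt (i : Fin n) : ‖simplexPt n i‖ ^ 2 = 1 - 1 / n := by
  rw [← real_inner_self_eq_norm_sq, inner_simplexPt, if_pos rfl]

theorem norm_sq_midpoint_simplexPt {i j : Fin n} (hij : i ≠ j) :
    ‖(2 : ℝ)⁻¹ • (simplexPt n i + simplexPt n j)‖ ^ 2 = 1 / 2 - 1 / n := by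
  rw [← real_inner_self_eq_norm_sq, real_inner_smul_left, real_inner_smul_right,
    real_inner_add_add_self, inner_simplexPt, inner_simplexPt, inner_simplexPt,
    if_pos rfl, if_pos rfl, if_neg hij]
  ring

theorem range_simplexPt_subset_norm_sq :
    Set.range (simplexPt n) ⊆ {x | ‖x‖ ^ 2 = 1 - 1 / n} := by
  rintro _ ⟨i, rfl⟩
  exact norm_sq_simplexPt i

theorem edgeMidpoints_subset_norm_sq (G : SimpleGraph (Fin n)) :
    {p | ∃ i j : Fin n, G.Adj i j ∧ p = (2 : ℝ)⁻¹ • (simplexPt n i + simplexPt n j)} ⊆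
      {x | ‖x‖ ^ 2 = 1 / 2 - 1 / n} := by
  rintro _ ⟨i, j, hij, rfl⟩
  exact norm_sq_midpoint_simplexPt hij.ne

theorem disjoint_norm_sq_vertex_midpoint :
    Disjoint {x : EuclideanSpace ℝ (Fin n) | ‖x‖ ^ 2 = 1 - 1 / n} {x | ‖x‖ ^ 2 = 1 / 2 - 1 / n} :=
  Set.disjoint_left.mpr fun x hV hM => by
    have : (1 : ℝ) - 1 / n = 1 / 2 - 1 / n := hV.symm.trans hM
    linarith

theorem range_simplexPt_eq_pointSet_inter (G : SimpleGraph (Fin n)) :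
    Set.range (simplexPt n) = pointSet n G ∩ {x | ‖x‖ ^ 2 = 1 - 1 / n} :=
  Set.eq_union_inter_of_subset_of_disjoint range_simplexPt_subset_norm_sq
    (edgeMidpoints_subset_norm_sq G) disjoint_norm_sq_vertex_midpoint

theorem edgeMidpoints_eq_pointSet_inter (G : SimpleGraph (Fin n)) :
    {p | ∃ i j : Fin n, G.Adj i j ∧ p = (2 : ℝ)⁻¹ • (simplexPt n i + simplexPt n j)} =
      pointSet n G ∩ {x | ‖x‖ ^ 2 = 1 / 2 - 1 / n} := by
  rw [pointSet, Set.union_comm]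
  exact Set.eq_union_inter_of_subset_of_disjoint (edgeMidpoints_subset_norm_sq G)
    range_simplexPt_subset_norm_sq disjoint_norm_sq_vertex_midpoint.symm

end SimplexPt

theorem isometry_maps_vertices_to_vertices_and_midpoints_to_midpoints_general
    (n : ℕ) (G₁ G₂ : SimpleGraph (Fin n))
    (L : EuclideanSpace ℝ (Fin n) ≃ₗᵢ[ℝ] EuclideanSpace ℝ (Fin n))
    (hL : L '' pointSet n G₁ = pointSet n G₂) :
    L '' Set.range (simplexPt n) = Set.range (simplexPt n) ∧
    L '' {p | ∃ i j : Fin n, G₁.Adj i j ∧ p = (2 : ℝ)⁻¹ • (simplexPt n i + simplexPt n j)} =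
      {p | ∃ i j : Fin n, G₂.Adj i j ∧ p = (2 : ℝ)⁻¹ • (simplexPt n i + simplexPt n j)} := by
  have hlevel (r : ℝ) :
      L '' (pointSet n G₁ ∩ {x | ‖x‖ ^ 2 = r}) = pointSet n G₂ ∩ {x | ‖x‖ ^ 2 = r} := by
    rw [image_inter_norm_sq_eq_of_norm_map L.norm_map, hL]
  have hvertices := hlevel (1 - 1 / n)
  have hmidpoints := hlevel (1 / 2 - 1 / n)
  rw [← range_simplexPt_eq_pointSet_inter, ← range_simplexPt_eq_pointSet_inter] at hvertices
  rw [← edgeMidpoints_eq_pointSet_inter, ← edgeMidpoints_eq_pointSet_inter] at hmidpoints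
  exact ⟨hvertices, hmidpoints⟩

theorem isometry_maps_vertices_to_vertices_and_midpoints_to_midpoints
    (n : ℕ) (hn : 2 ≤ n) (G₁ G₂ : SimpleGraph (Fin n))
    (L : EuclideanSpace ℝ (Fin n) ≃ₗᵢ[ℝ] EuclideanSpace ℝ (Fin n))
    (hL : L '' pointSet n G₁ = pointSet n G₂) :
    L '' Set.range (simplexPt n) = Set.range (simplexPt n) ∧
    L '' {p | ∃ i j : Fin n, G₁.Adj i j ∧ p = (2 : ℝ)⁻¹ • (simplexPt n i + simplexPt n j)} =
      {p | ∃ i j : Fin n, G₂.Adj i j ∧ p = (2 : ℝ)⁻¹ • (simplexPt n i + simplexPt n j)} :=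
  isometry_maps_vertices_to_vertices_and_midpoints_to_midpoints_general n G₁ G₂ L hL
end

section
/- Let n ≥ 2 and let G₁ and G₂ be simple graphs on Fin n. Then G₁ and G₂ are isomorphic if and only if there exists a permutation σ of Fin n such that the coordinate-permutation isometry M_σ satisfies M_σ '' S(G₁) = S(G₂), where S(G) = {s i : i ∈ Fin n} ∪ {(s i + s j)/2 : G.Adj i j} is the point-set form of G built from the centered standard simplex vertices s. Equivalently, G₁ ≅ G₂ if and only if there exists σ with {(s (σ i) + s (σ j))/2 : G₁.Adj i j} = {(s i + s j)/2 : G₂.Adj i j}. -/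
open SimpleGraph

lemma Set.union_eq_union_iff_of_disjoint {α : Type*} {s t u : Set α}
    (ht : Disjoint s t) (hu : Disjoint s u) : s ∪ t = s ∪ u ↔ t = u := by
  refine ⟨fun h => ?_, fun h => h ▸ rfl⟩
  rw [← ht.sup_sdiff_cancel_left, ← hu.sup_sdiff_cancel_left]
  exact congrArg (· \ s) h

lemma SimpleGraph.nonempty_iso_iff_exists_equiv {V W : Type*} {G₁ : SimpleGraph V}
    {G₂ : SimpleGraph W} :
    Nonempty (G₁ ≃g G₂) ↔ ∃ σ : V ≃ W, ∀ i j, G₁.Adj i j ↔ G₂.Adj (σ i) (σ j) :=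
  ⟨fun ⟨φ⟩ => ⟨φ.toEquiv, fun _ _ => φ.map_adj_iff.symm⟩,
    fun ⟨σ, h⟩ => ⟨⟨σ, (h _ _).symm⟩⟩⟩

lemma SimpleGraph.setOf_adj_comp_eq_setOf_adj_iff {V W E : Type*} (f : W → W → E)
    (hf : ∀ i j k l, f i j = f k l ↔ s(i, j) = s(k, l)) (σ : V ≃ W)
    (G₁ : SimpleGraph V) (G₂ : SimpleGraph W) :
    {p | ∃ i j, G₁.Adj i j ∧ p = f (σ i) (σ j)} = {p | ∃ i j, G₂.Adj i j ∧ p = f i j} ↔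
      ∀ i j, G₁.Adj i j ↔ G₂.Adj (σ i) (σ j) := by
  constructor
  · intro h i j
    constructor
    · intro hadj
      obtain ⟨k, l, hkl, he⟩ : f (σ i) (σ j) ∈ {p | ∃ i j, G₂.Adj i j ∧ p = f i j} :=
        h ▸ ⟨i, j, hadj, rfl⟩
      rwa [← mem_edgeSet, (hf _ _ _ _).1 he, mem_edgeSet]
    · intro hadj
      obtain ⟨a, b, hab, he⟩ : f (σ i) (σ j) ∈ {p | ∃ i j, G₁.Adj i j ∧ p = f (σ i) (σ j)} :=
        h.symm ▸ ⟨σ i, σ j, hadj, rfl⟩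
      have hpair : Sym2.map σ s(i, j) = Sym2.map σ s(a, b) := (hf _ _ _ _).1 he
      rwa [← mem_edgeSet, (Sym2.map.injective σ.injective) hpair, mem_edgeSet]
  · intro h
    ext p
    constructor
    · rintro ⟨i, j, hadj, rfl⟩
      exact ⟨σ i, σ j, (h i j).1 hadj, rfl⟩
    · rintro ⟨i, j, hadj, rfl⟩
      exact ⟨σ.symm i, σ.symm j, by simpa [h] using hadj, by simp⟩

lemma simplexPt_add_simplexPt_eq_iff {n : ℕ} {i j k l : Fin n} :
    simplexPt n i + simplexPt n j = simplexPt n k + simplexPt n l ↔ s(i, j) = s(k, l) := by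
  simp only [simplexPt, sub_add_sub_comm, sub_left_inj]
  rw [← (WithLp.ofLp_injective 2).eq_iff]
  simp only [WithLp.ofLp_add, PiLp.ofLp_single]
  rw [Pi.single_add_single_eq_single_add_single one_ne_zero one_ne_zero, Sym2.eq_iff]
  norm_num

lemma midpoint_simplexPt_eq_iff {n : ℕ} (i j k l : Fin n) :
    (2 : ℝ)⁻¹ • (simplexPt n i + simplexPt n j) = (2 : ℝ)⁻¹ • (simplexPt n k + simplexPt n l) ↔
      s(i, j) = s(k, l) :=
  (smul_right_injective _ (by norm_num)).eq_iff.trans simplexPt_add_simplexPt_eq_iff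

lemma disjoint_range_simplexPt_midpoints {n : ℕ} (σ : Equiv.Perm (Fin n))
    (G : SimpleGraph (Fin n)) :
    Disjoint (Set.range (simplexPt n))
      {p | ∃ i j, G.Adj i j ∧ p = (2 : ℝ)⁻¹ • (simplexPt n (σ i) + simplexPt n (σ j))} := by
  rw [Set.disjoint_left]
  rintro _ ⟨a, rfl⟩ ⟨i, j, hadj, he⟩
  have hdiag : simplexPt n a = (2 : ℝ)⁻¹ • (simplexPt n a + simplexPt n a) := by
    rw [← two_smul ℝ, smul_smul]; norm_num
  rw [hdiag, midpoint_simplexPt_eq_iff, Sym2.eq_iff] at he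
  exact hadj.ne (σ.injective (by grind))

lemma Mperm_simplexPt (n : ℕ) (σ : Equiv.Perm (Fin n)) (i : Fin n) :
    Mperm n σ (simplexPt n i) = simplexPt n (σ i) := by
  simp only [simplexPt, Mperm, map_sub, map_smul, map_sum, EuclideanSpace.piLpCongrLeft_single,
    Equiv.sum_comp σ (fun j => EuclideanSpace.single j (1 : ℝ))]

lemma Mperm_image_pointSet (n : ℕ) (σ : Equiv.Perm (Fin n)) (G : SimpleGraph (Fin n)) :
    Mperm n σ '' pointSet n G = Set.range (simplexPt n) ∪
      {p | ∃ i j, G.Adj i j ∧ p = (2 : ℝ)⁻¹ • (simplexPt n (σ i) + simplexPt n (σ j))} := by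
  have hvert : Mperm n σ ∘ simplexPt n = simplexPt n ∘ σ := funext (Mperm_simplexPt n σ)
  rw [pointSet, Set.image_union, ← Set.range_comp, hvert, σ.surjective.range_comp]
  congr 1
  ext p
  simp [Mperm_simplexPt, eq_comm]

theorem isomorphic_iff_exists_perm_registration_general
    (n : ℕ) (G₁ G₂ : SimpleGraph (Fin n)) :
    (Nonempty (G₁ ≃g G₂) ↔
      ∃ σ : Equiv.Perm (Fin n), Mperm n σ '' pointSet n G₁ = pointSet n G₂) ∧
    (Nonempty (G₁ ≃g G₂) ↔
      ∃ σ : Equiv.Perm (Fin n),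
        {p | ∃ i j : Fin n, G₁.Adj i j ∧
            p = (2 : ℝ)⁻¹ • (simplexPt n (σ i) + simplexPt n (σ j))} =
        {p | ∃ i j : Fin n, G₂.Adj i j ∧
            p = (2 : ℝ)⁻¹ • (simplexPt n i + simplexPt n j)}) := by
  have hmid : Nonempty (G₁ ≃g G₂) ↔ ∃ σ : Equiv.Perm (Fin n),
      {p | ∃ i j : Fin n, G₁.Adj i j ∧
          p = (2 : ℝ)⁻¹ • (simplexPt n (σ i) + simplexPt n (σ j))} =
      {p | ∃ i j : Fin n, G₂.Adj i j ∧ p = (2 : ℝ)⁻¹ • (simplexPt n i + simplexPt n j)} :=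
    nonempty_iso_iff_exists_equiv.trans <| exists_congr fun σ =>
      (setOf_adj_comp_eq_setOf_adj_iff _ midpoint_simplexPt_eq_iff σ G₁ G₂).symm
  refine ⟨hmid.trans <| exists_congr fun σ => ?_, hmid⟩
  rw [Mperm_image_pointSet, pointSet]
  exact (Set.union_eq_union_iff_of_disjoint (disjoint_range_simplexPt_midpoints σ G₁)
    (disjoint_range_simplexPt_midpoints 1 G₂)).symm

theorem isomorphic_iff_exists_perm_registration
    (n : ℕ) (hn : 2 ≤ n) (G₁ G₂ : SimpleGraph (Fin n)) :
    (Nonempty (G₁ ≃g G₂) ↔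
      ∃ σ : Equiv.Perm (Fin n), Mperm n σ '' pointSet n G₁ = pointSet n G₂) ∧
    (Nonempty (G₁ ≃g G₂) ↔
      ∃ σ : Equiv.Perm (Fin n),
        {p | ∃ i j : Fin n, G₁.Adj i j ∧
            p = (2 : ℝ)⁻¹ • (simplexPt n (σ i) + simplexPt n (σ j))} =
        {p | ∃ i j : Fin n, G₂.Adj i j ∧
            p = (2 : ℝ)⁻¹ • (simplexPt n i + simplexPt n j)}) :=
  isomorphic_iff_exists_perm_registration_general n G₁ G₂
end
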